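/- arXiv:2511.03028 — 2 statements merged into one kernel-verified Lean document; each statement's English description precedes it below -/
import Mathlib

section
/- Let M be an m×r integer matrix, let d be a positive integer dividing every entry of the j-th column of M, and let M' be the m×r matrix obtained from M by dividing the j-th column by d. If no standard basis vector of ℤ^m lies in the subgroup generated by the columns of M', then the identity map on ℤ^m induces a graph homomorphism from M^SACG to M'^SACG; in particular, χ(M^SACG) ≤ χ(M'^SACG). -/
/-- The subgroup of `ℤ^m` generated by the columns of `M`. -/
def colSpan (m r : ℕ) (M : Matrix (Fin m) (Fin r) ℤ) : AddSubgroup (Fin m → ℤ) :=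
  AddSubgroup.closure (Set.range fun j : Fin r => fun i : Fin m => M i j)

/-- The standardized Abelian Cayley graph associated to `M`. -/
def SACG (m r : ℕ) (M : Matrix (Fin m) (Fin r) ℤ) :
    SimpleGraph ((Fin m → ℤ) ⧸ colSpan m r M) where
  Adj x y := x ≠ y ∧ ∃ i : Fin m,
    x - y = QuotientAddGroup.mk (Pi.single i (1 : ℤ)) ∨
    y - x = QuotientAddGroup.mk (Pi.single i (1 : ℤ))
  symm := ⟨by
    rintro x y ⟨hne, i, h⟩
    exact ⟨hne.symm, i, h.symm⟩⟩
  loopless := ⟨by rintro x ⟨h, -⟩; exact h rfl⟩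

/-!
Every column of `M` is a multiple of the corresponding column of `M'`, so the column span of `M`
lies in that of `M'` and the identity of `ℤ^m` descends to a group homomorphism between the
quotients. It sends a difference `±e_i` to `±e_i`, which stays nonzero because no `e_i` lies in
the column span of `M'`; hence adjacent vertices go to adjacent vertices.
-/

variable {m r : ℕ}

theorem colSpan_le_iff {M : Matrix (Fin m) (Fin r) ℤ} {H : AddSubgroup (Fin m → ℤ)} :
    colSpan m r M ≤ H ↔ ∀ j, (fun i => M i j) ∈ H := by
  rw [colSpan, AddSubgroup.closure_le, Set.range_subset_iff]
  rfl

theorem column_mem_colSpan (M : Matrix (Fin m) (Fin r) ℤ) (j : Fin r) :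
    (fun i => M i j) ∈ colSpan m r M :=
  AddSubgroup.subset_closure (Set.mem_range_self j)

theorem colSpan_le_of_column_dvd {M M' : Matrix (Fin m) (Fin r) ℤ}
    (h : ∀ j, ∃ c : ℤ, ∀ i, M i j = c * M' i j) : colSpan m r M ≤ colSpan m r M' := by
  refine colSpan_le_iff.mpr fun j => ?_
  obtain ⟨c, hc⟩ := h j
  have hcol : (fun i => M i j) = c • fun i => M' i j := funext fun i => by simpa using hc i
  exact hcol ▸ zsmul_mem (column_mem_colSpan M' j) c

theorem SACG_adj_of_sub_eq {M : Matrix (Fin m) (Fin r) ℤ} {x y : (Fin m → ℤ) ⧸ colSpan m r M}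
    {i : Fin m} (hloop : (Pi.single i (1 : ℤ) : Fin m → ℤ) ∉ colSpan m r M)
    (h : x - y = QuotientAddGroup.mk (Pi.single i (1 : ℤ)) ∨
      y - x = QuotientAddGroup.mk (Pi.single i (1 : ℤ))) :
    (SACG m r M).Adj x y := by
  refine ⟨fun hxy => hloop ?_, i, h⟩
  rw [← QuotientAddGroup.eq_zero_iff]
  subst hxy
  simpa using h.elim Eq.symm Eq.symm

def SACG.homOfLE {M M' : Matrix (Fin m) (Fin r) ℤ} (hle : colSpan m r M ≤ colSpan m r M')
    (hloops : ∀ i : Fin m, (Pi.single i (1 : ℤ) : Fin m → ℤ) ∉ colSpan m r M') :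
    SACG m r M →g SACG m r M' where
  toFun := QuotientAddGroup.map _ _ (AddMonoidHom.id _) hle
  map_rel' := by
    rintro x y ⟨-, i, h⟩
    refine SACG_adj_of_sub_eq (hloops i) ?_
    simp only [← map_sub]
    rcases h with h | h
    · exact Or.inl (by rw [h]; rfl)
    · exact Or.inr (by rw [h]; rfl)

theorem SACG.homOfLE_mk {M M' : Matrix (Fin m) (Fin r) ℤ} (hle : colSpan m r M ≤ colSpan m r M')
    (hloops : ∀ i : Fin m, (Pi.single i (1 : ℤ) : Fin m → ℤ) ∉ colSpan m r M')
    (x : Fin m → ℤ) : SACG.homOfLE hle hloops (QuotientAddGroup.mk x) = QuotientAddGroup.mk x :=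
  rfl

theorem stmt_2_general (m r : ℕ) (M M' : Matrix (Fin m) (Fin r) ℤ) (j : Fin r) (d : ℤ)
    (hdiv : ∀ i, M i j = d * M' i j)
    (hcols : ∀ j' : Fin r, j' ≠ j → ∀ i, M' i j' = M i j')
    (hloops : ∀ i : Fin m, (Pi.single i (1 : ℤ) : Fin m → ℤ) ∉ colSpan m r M') :
    (∃ f : (SACG m r M) →g (SACG m r M'),
        ∀ x : Fin m → ℤ, f (QuotientAddGroup.mk x) = QuotientAddGroup.mk x) ∧
      (SACG m r M).chromaticNumber ≤ (SACG m r M').chromaticNumber := by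
  have hle : colSpan m r M ≤ colSpan m r M' := by
    refine colSpan_le_of_column_dvd fun j' => ?_
    by_cases hj : j' = j
    · exact ⟨d, hj ▸ hdiv⟩
    · exact ⟨1, fun i => by rw [hcols j' hj i, one_mul]⟩
  exact ⟨⟨SACG.homOfLE hle hloops, SACG.homOfLE_mk hle hloops⟩,
    SimpleGraph.chromaticNumber_mono_of_hom (SACG.homOfLE hle hloops)⟩

theorem stmt_2 (m r : ℕ) (M M' : Matrix (Fin m) (Fin r) ℤ) (j : Fin r) (d : ℤ)
    (hd : 0 < d)
    (hdiv : ∀ i, M i j = d * M' i j)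
    (hcols : ∀ j' : Fin r, j' ≠ j → ∀ i, M' i j' = M i j')
    (hloops : ∀ i : Fin m, (Pi.single i (1 : ℤ) : Fin m → ℤ) ∉ colSpan m r M') :
    (∃ f : (SACG m r M) →g (SACG m r M'),
        ∀ x : Fin m → ℤ, f (QuotientAddGroup.mk x) = QuotientAddGroup.mk x) ∧
      (SACG m r M).chromaticNumber ≤ (SACG m r M').chromaticNumber :=
  stmt_2_general m r M M' j d hdiv hcols hloops
end

section
/- (Tomato Cage Theorem) Let y = (y_1, …, y_m)^T be an m×1 integer matrix such that y ≠ e_i and y ≠ −e_i for every standard basis vector e_i of ℤ^m, and let X = y^SACG. Then χ(X) = 2 if y has an even number of odd entries, and χ(X) = 3 if y has an odd number of odd entries. -/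
/-! A weight vector `w ∈ {±1}ᵐ` with `N ∣ w ⬝ᵥ y` turns `x ↦ w ⬝ᵥ x (mod N)` into a graph
homomorphism from `y^SACG` to the cycle `C_N`. With `wᵢ` the sign of `yᵢ` and `N = ∑ |yᵢ|`
(or `N = 2` when this sum is even) this gives the upper bounds `χ(C_N) ∈ {2, 3}`.
The hypothesis on `y` says that no `eᵢ` lies in `⟨y⟩`, so `x` and `x + eᵢ` are always adjacent:
this gives an edge, and turns a 2-colouring `c` into a map `ℤᵐ → ZMod 2` with
`c (x + eᵢ) = c x + 1`, hence `c x = c 0 + ∑ xᵢ`; then `c y = c 0` forces `∑ yᵢ` to be even. -/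

open SimpleGraph Matrix

section StepFunction

variable {ι : Type*} [Fintype ι] [DecidableEq ι]

theorem closure_range_single_one_eq_top :
    AddSubgroup.closure (Set.range fun i : ι => Pi.single i (1 : ℤ)) = ⊤ := by
  rw [← Submodule.span_int_eq_addSubgroupClosure, Submodule.toAddSubgroup_eq_top]
  have hbasis : ⇑(Pi.basisFun ℤ ι) = fun i => Pi.single i 1 := funext (Pi.basisFun_apply ℤ ι)
  exact hbasis ▸ (Pi.basisFun ℤ ι).span_eq

theorem eq_add_sum_smul_of_add_single {A : Type*} [AddCommGroup A] {f : (ι → ℤ) → A} {a : A}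
    (hf : ∀ x i, f (x + Pi.single i 1) = f x + a) (v : ι → ℤ) :
    f v = f 0 + (∑ i, v i) • a := by
  let P : AddSubgroup (ι → ℤ) :=
    { carrier := {v | ∀ x, f (x + v) = f x + (∑ i, v i) • a}
      zero_mem' := by simp
      add_mem' := fun {u v} hu hv x => by
        rw [← add_assoc, hv, hu, add_assoc, ← add_smul, ← Finset.sum_add_distrib]
        rfl
      neg_mem' := fun {v} hv x => by
        have := hv (x + -v)
        simp only [neg_add_cancel_right, Pi.neg_apply, Finset.sum_neg_distrib, neg_smul] at this ⊢
        rw [this, add_neg_cancel_right] }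
  have hP : AddSubgroup.closure (Set.range fun i : ι => Pi.single i (1 : ℤ)) ≤ P :=
    (AddSubgroup.closure_le P).mpr <| by
      rintro _ ⟨i, rfl⟩ x
      simp [hf, Pi.single_apply]
  rw [closure_range_single_one_eq_top, top_le_iff] at hP
  simpa using (hP ▸ AddSubgroup.mem_top v : v ∈ P) 0

end StepFunction

theorem colSpan_one_eq_zmultiples {m : ℕ} (M : Matrix (Fin m) (Fin 1) ℤ) :
    colSpan m 1 M = AddSubgroup.zmultiples fun i => M i 0 := by
  rw [colSpan, AddSubgroup.zmultiples_eq_closure, Set.range_unique]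
  rfl

theorem single_notMem_zmultiples {ι : Type*} [DecidableEq ι] {y : ι → ℤ}
    (hy : ∀ i, y ≠ Pi.single i 1 ∧ y ≠ -Pi.single i 1) (i : ι) :
    Pi.single i 1 ∉ AddSubgroup.zmultiples y := by
  rintro ⟨k, hk⟩
  have hki : k * y i = 1 := by simpa using congrFun hk i
  rcases Int.mul_eq_one_iff_eq_one_or_neg_one.mp hki with ⟨rfl, -⟩ | ⟨rfl, -⟩
  · exact (hy i).1 (by simpa using hk)
  · exact (hy i).2 (by rw [← hk]; simp)

theorem cycleGraph_adj_of_sub_eq_one_or_neg_one {n : ℕ} {u v : ZMod (n + 2)}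
    (h : u - v = 1 ∨ u - v = -1) : (cycleGraph (n + 2)).Adj u v :=
  cycleGraph_adj.mpr <| h.imp id fun h =>
    show v - u = (1 : ZMod (n + 2)) by rw [← neg_sub, h, neg_neg]

theorem exists_sign_dotProduct_eq_sum_natAbs {ι : Type*} [Fintype ι] (y : ι → ℤ) :
    ∃ w : ι → ℤ, (∀ i, w i = 1 ∨ w i = -1) ∧ w ⬝ᵥ y = ∑ i, ((y i).natAbs : ℤ) :=
  ⟨fun i => if 0 ≤ y i then 1 else -1, fun i => by dsimp only; split_ifs <;> simp,
    Finset.sum_congr rfl fun i _ => by dsimp only; split_ifs <;> omega⟩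

theorem Finset.odd_sum_iff_odd_sum_natAbs {ι : Type*} (s : Finset ι) (f : ι → ℤ) :
    Odd (∑ i ∈ s, f i) ↔ Odd (∑ i ∈ s, (f i).natAbs) := by
  induction s using Finset.cons_induction with
  | empty => simp
  | cons a s ha ih =>
    simp only [Finset.sum_cons, Int.odd_add, Nat.odd_add, ← Int.not_odd_iff_even,
      ← Nat.not_odd_iff_even, ih, Int.natAbs_odd]

theorem sum_natAbs_ne_one {ι : Type*} [Fintype ι] [DecidableEq ι] {y : ι → ℤ}
    (hy : ∀ i, y ≠ Pi.single i 1 ∧ y ≠ -Pi.single i 1) : ∑ i, (y i).natAbs ≠ 1 := by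
  intro h
  obtain ⟨i, -, hi⟩ := Finset.exists_ne_zero_of_sum_ne_zero (h ▸ one_ne_zero)
  have hsplit : (y i).natAbs + ∑ j ∈ Finset.univ.erase i, (y j).natAbs = 1 := by
    rw [Finset.add_sum_erase _ (fun j => (y j).natAbs) (Finset.mem_univ i), h]
  have hrest : ∀ j ≠ i, y j = 0 := fun j hj => Int.natAbs_eq_zero.mp <|
    Finset.sum_eq_zero_iff.mp (show ∑ j ∈ Finset.univ.erase i, (y j).natAbs = 0 by omega) j
      (by simp [hj])
  have hyi : y = Pi.single i (y i) := by
    ext j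
    by_cases hj : j = i
    · simp [hj]
    · simp [hj, hrest j hj]
  rcases Int.natAbs_eq_iff.mp (show (y i).natAbs = 1 by omega) with h1 | h1
  · exact (hy i).1 (by rw [hyi, h1, Nat.cast_one])
  · exact (hy i).2 (by rw [hyi, h1, Nat.cast_one, Pi.single_neg])

namespace SACG

variable {m r : ℕ} {M : Matrix (Fin m) (Fin r) ℤ}

theorem adj_mk_add_single {i : Fin m} (hi : Pi.single i 1 ∉ colSpan m r M) (x : Fin m → ℤ) :
    (SACG m r M).Adj (QuotientAddGroup.mk x) (QuotientAddGroup.mk (x + Pi.single i 1)) := by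
  refine ⟨fun h => hi ?_, i, Or.inr ?_⟩
  · simpa using QuotientAddGroup.eq_iff_sub_mem.mp h.symm
  · rw [← QuotientAddGroup.mk_sub, add_sub_cancel_left]

theorem not_colorable_two (hloop : ∀ i, Pi.single i 1 ∉ colSpan m r M) (j : Fin r)
    (hodd : Odd (∑ i, M i j)) : ¬ (SACG m r M).Colorable 2 := by
  rintro ⟨C⟩
  let c : (Fin m → ℤ) → ZMod 2 := fun x => C (QuotientAddGroup.mk x)
  have hne_add_one : ∀ a b : ZMod 2, a ≠ b → a = b + 1 := by decide
  have hstep : ∀ x i, c (x + Pi.single i 1) = c x + 1 := fun x i =>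
    hne_add_one _ _ (C.valid (adj_mk_add_single (hloop i) x)).symm
  have hcol : c (fun i => M i j) = c 0 := by
    refine congrArg C (QuotientAddGroup.eq_iff_sub_mem.mpr ?_)
    rw [sub_zero]
    exact AddSubgroup.subset_closure ⟨j, rfl⟩
  have := eq_add_sum_smul_of_add_single hstep fun i => M i j
  rw [hcol, left_eq_add, zsmul_one, ZMod.intCast_eq_zero_iff_even] at this
  exact Int.not_even_iff_odd.mpr hodd this

def weightedSum (N : ℕ) (w : Fin m → ℤ) (hdvd : ∀ j, (N : ℤ) ∣ w ⬝ᵥ fun i => M i j) :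
    (Fin m → ℤ) ⧸ colSpan m r M →+ ZMod N :=
  QuotientAddGroup.lift _
    ((Int.castAddHom (ZMod N)).comp (AddMonoidHom.mk' (w ⬝ᵥ ·) (dotProduct_add w)))
    ((AddSubgroup.closure_le _).mpr <| by
      rintro _ ⟨j, rfl⟩
      exact (ZMod.intCast_zmod_eq_zero_iff_dvd _ N).mpr (hdvd j))

theorem weightedSum_mk (N : ℕ) (w : Fin m → ℤ) (hdvd : ∀ j, (N : ℤ) ∣ w ⬝ᵥ fun i => M i j)
    (x : Fin m → ℤ) : weightedSum N w hdvd (QuotientAddGroup.mk x) = ((w ⬝ᵥ x : ℤ) : ZMod N) :=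
  rfl

-- `C_N` is taken as `cycleGraph (n + 2)` because `ZMod (n + 2)` is definitionally `Fin (n + 2)`.
def homCycleGraph (n : ℕ) (w : Fin m → ℤ) (hw : ∀ i, w i = 1 ∨ w i = -1)
    (hdvd : ∀ j, ((n + 2 : ℕ) : ℤ) ∣ w ⬝ᵥ fun i => M i j) :
    SACG m r M →g cycleGraph (n + 2) where
  toFun := weightedSum (n + 2) w hdvd
  map_rel' := by
    rintro x x' ⟨-, i, h⟩
    set F := weightedSum (n + 2) w hdvd
    have hsingle : F (QuotientAddGroup.mk (Pi.single i 1)) = w i := by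
      rw [weightedSum_mk, dotProduct_single_one]
    have hdiff : F x - F x' = w i ∨ F x - F x' = -w i := by
      rcases h with h | h
      · rw [← map_sub, h, hsingle]; exact .inl rfl
      · rw [← neg_sub, ← map_sub, h, hsingle]; exact .inr rfl
    apply cycleGraph_adj_of_sub_eq_one_or_neg_one
    rcases hw i with hwi | hwi <;> simpa [hwi, or_comm] using hdiff

end SACG

theorem stmt_6 (m : ℕ) (hm : 1 ≤ m) (y : Fin m → ℤ)
    (hy : ∀ i : Fin m, y ≠ Pi.single i 1 ∧ y ≠ -Pi.single i 1)
    (M : Matrix (Fin m) (Fin 1) ℤ) (hM : ∀ i, M i 0 = y i) :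
    (Even (Finset.univ.filter fun i => Odd (y i)).card →
      (SACG m 1 M).chromaticNumber = 2) ∧
    (Odd (Finset.univ.filter fun i => Odd (y i)).card →
      (SACG m 1 M).chromaticNumber = 3) := by
  have hcol : (fun i => M i 0) = y := funext hM
  have hloop : ∀ i, Pi.single i 1 ∉ colSpan m 1 M := by
    rw [colSpan_one_eq_zmultiples, hcol]
    exact single_notMem_zmultiples hy
  set N := ∑ i, (y i).natAbs
  obtain ⟨w, hw, hwy⟩ := exists_sign_dotProduct_eq_sum_natAbs y
  have hdvd : ∀ k : ℕ, k ∣ N → ∀ j : Fin 1, (k : ℤ) ∣ w ⬝ᵥ fun i => M i j := by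
    intro k hk j
    rw [Fin.fin_one_eq_zero j, hcol, hwy, ← Nat.cast_sum]
    exact Int.natCast_dvd_natCast.mpr hk
  have hparity : Odd N ↔ Odd (Finset.univ.filter fun i => Odd (y i)).card := by
    simp only [N, Finset.odd_sum_iff_odd_card_odd, Int.natAbs_odd]
  constructor
  · intro heven
    have h2N : 2 ∣ N :=
      (Nat.not_odd_iff_even.mp (hparity.not.mpr (Nat.not_odd_iff_even.mpr heven))).two_dvd
    refine le_antisymm ?_ (two_le_chromaticNumber_of_adj
      (SACG.adj_mk_add_single (hloop ⟨0, hm⟩) 0))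
    calc (SACG m 1 M).chromaticNumber
        ≤ (cycleGraph 2).chromaticNumber :=
          chromaticNumber_mono_of_hom (SACG.homCycleGraph 0 w hw (hdvd 2 h2N))
      _ = 2 := chromaticNumber_cycleGraph_of_even 2 le_rfl even_two
  · intro hodd
    have hNodd : Odd N := hparity.mpr hodd
    have hN1 : N ≠ 1 := sum_natAbs_ne_one hy
    obtain ⟨n, hn⟩ : ∃ n, N = n + 2 := ⟨N - 2, by obtain ⟨k, hk⟩ := hNodd; omega⟩
    have hsum : Odd (∑ i, M i 0) := by
      rw [hcol, Finset.odd_sum_iff_odd_sum_natAbs]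
      exact hNodd
    refine le_antisymm ?_ ?_
    · calc (SACG m 1 M).chromaticNumber
          ≤ (cycleGraph (n + 2)).chromaticNumber :=
            chromaticNumber_mono_of_hom (SACG.homCycleGraph n w hw (hdvd _ (hn ▸ dvd_rfl)))
        _ = 3 := chromaticNumber_cycleGraph_of_odd _ le_add_self (hn ▸ hNodd)
    · by_contra hlt
      exact SACG.not_colorable_two hloop 0 hsum
        (chromaticNumber_le_iff_colorable.mp (Order.le_of_lt_add_one (not_le.mp hlt)))
end
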